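/- Let μ₀, μ₁ ∈ ℝ^p, let Σ₀, Σ₁ be symmetric positive-definite real p×p matrices with det Σ₁ = det Σ₀, and let r > 0. Then P_{(μ₁,Σ₁)}(E(μ₀,Σ₀,r)) ≤ P_{(μ₀,Σ₀)}(E(μ₀,Σ₀,r)). In other words, among all parameters with the same determinant of the scatter matrix, the probability of the ellipsoid E(μ₀,Σ₀,r) is maximized at (μ₀,Σ₀). -/

import Mathlib

open MeasureTheory Matrix Filter Set
open scoped RealInnerProductSpace ENNReal

noncomputable section

/-- The quadratic form `vᵀ S⁻¹ v`. -/
def quadForm {p : ℕ} (S : Matrix (Fin p) (Fin p) ℝ) (v : EuclideanSpace ℝ (Fin p)) : ℝ :=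
  ⟪v, Matrix.toEuclideanLin S⁻¹ v⟫

/-- The elliptical density `det(S)^{-1/2} g((x-μ)ᵀ S⁻¹ (x-μ))`. -/
def ellDensity {p : ℕ} (g : ℝ → ℝ) (μ : EuclideanSpace ℝ (Fin p))
    (S : Matrix (Fin p) (Fin p) ℝ) (x : EuclideanSpace ℝ (Fin p)) : ℝ :=
  (Real.sqrt S.det)⁻¹ * g (quadForm S (x - μ))

/-- The elliptical probability measure `P_θ`, `θ = (μ, S)`. -/
def ellMeasure {p : ℕ} (g : ℝ → ℝ) (μ : EuclideanSpace ℝ (Fin p))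
    (S : Matrix (Fin p) (Fin p) ℝ) : Measure (EuclideanSpace ℝ (Fin p)) :=
  volume.withDensity fun x => ENNReal.ofReal (ellDensity g μ S x)

/-- Condition G1: a strictly decreasing sequence tending to 0 on which `g` strictly increases. -/
def CondG1 (g : ℝ → ℝ) : Prop :=
  ∃ t : ℕ → ℝ, StrictAnti t ∧ Tendsto t atTop (nhds 0) ∧ (∀ n, 0 < t n) ∧
    ∀ n, g (t n) < g (t (n + 1))

open Classical in
/-- Kullback-Leibler divergence `KL(μ‖ν) = ∫ log (dμ/dν) dμ`, with value `+∞` if `μ` is not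
absolutely continuous w.r.t. `ν` (or the integral diverges). -/
def KL {α : Type*} [MeasurableSpace α] (μ ν : Measure α) : EReal :=
  if μ ≪ ν ∧ Integrable (fun x => Real.log ((μ.rnDeriv ν x).toReal)) μ then
    ((∫ x, Real.log ((μ.rnDeriv ν x).toReal) ∂μ : ℝ) : EReal)
  else ⊤

/-- The ellipsoid `E(μ, S, r) = {x : (x-μ)ᵀ S⁻¹ (x-μ) ≤ r²}`. -/
def ellipsoid {p : ℕ} (μ : EuclideanSpace ℝ (Fin p)) (S : Matrix (Fin p) (Fin p) ℝ)
    (r : ℝ) : Set (EuclideanSpace ℝ (Fin p)) :=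
  {x | quadForm S (x - μ) ≤ r ^ 2}

/-! With `det S₁ = det S₀` both densities are one nonincreasing profile `φ` composed with the
respective quadratic forms, and the change of variables `x ↦ B (x - μ)` with `S⁻¹ = Bᵀ B` shows
that their superlevel sets have volumes depending on `S` only through `det S`. By the layer-cake
formula it suffices to compare, level by level, the volumes of the superlevel sets inside
`E = E(μ₀, S₀, r)`. The superlevel sets of the `(μ₀, S₀)` density are sublevel sets of the very
quadratic form that defines `E`, so each one either contains `E` or lies inside it; its
intersection with `E` therefore has the largest volume `min (vol A) (vol E)` possible for a set `A`
of its volume. -/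

open scoped MatrixOrder

section Rearrangement

variable {α : Type*} [MeasurableSpace α] {μ : Measure α}

lemma measure_inter_le_of_measure_eq_of_nested {A B E : Set α} (hAB : μ A = μ B)
    (hBE : B ⊆ E ∨ E ⊆ B) : μ (A ∩ E) ≤ μ (B ∩ E) := by
  rcases hBE with hBE | hEB
  · calc μ (A ∩ E) ≤ μ A := measure_mono inter_subset_left
      _ = μ (B ∩ E) := by rw [hAB, inter_eq_left.2 hBE]
  · calc μ (A ∩ E) ≤ μ E := measure_mono inter_subset_right
      _ = μ (B ∩ E) := by rw [inter_eq_right.2 hEB]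

lemma lintegral_ofReal_eq_lintegral_meas_le {f : α → ℝ} (hf : AEMeasurable f μ) :
    ∫⁻ x, ENNReal.ofReal (f x) ∂μ = ∫⁻ t in Ioi 0, μ {x | t ≤ f x} := by
  have hpos : ∀ t > (0 : ℝ), {x | t ≤ max (f x) 0} = {x | t ≤ f x} := fun t ht => by
    ext x; simp [not_le.2 ht]
  calc ∫⁻ x, ENNReal.ofReal (f x) ∂μ = ∫⁻ x, ENNReal.ofReal (max (f x) 0) ∂μ := by
        simp [ENNReal.ofReal_max]
    _ = ∫⁻ t in Ioi 0, μ {x | t ≤ max (f x) 0} :=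
        lintegral_eq_lintegral_meas_le μ (ae_of_all _ fun _ => le_max_right _ _)
          (hf.max aemeasurable_const)
    _ = ∫⁻ t in Ioi 0, μ {x | t ≤ f x} :=
        setLIntegral_congr_fun measurableSet_Ioi fun t ht => by rw [hpos t ht]

theorem setLIntegral_ofReal_le_of_meas_le_eq_of_nested {f g : α → ℝ} (hf : AEMeasurable f μ)
    (hg : AEMeasurable g μ) {E : Set α} (hE : MeasurableSet E)
    (hfg : ∀ t > 0, μ {x | t ≤ f x} = μ {x | t ≤ g x})
    (hgE : ∀ t > 0, {x | t ≤ g x} ⊆ E ∨ E ⊆ {x | t ≤ g x}) :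
    ∫⁻ x in E, ENNReal.ofReal (f x) ∂μ ≤ ∫⁻ x in E, ENNReal.ofReal (g x) ∂μ := by
  rw [lintegral_ofReal_eq_lintegral_meas_le hf.restrict,
    lintegral_ofReal_eq_lintegral_meas_le hg.restrict]
  refine setLIntegral_mono' measurableSet_Ioi fun t ht => ?_
  rw [Measure.restrict_apply' hE, Measure.restrict_apply' hE]
  exact measure_inter_le_of_measure_eq_of_nested (hfg t ht) (hgE t ht)

end Rearrangement

section QuadForm

variable {p : ℕ} {S : Matrix (Fin p) (Fin p) ℝ}

lemma continuous_quadForm (S : Matrix (Fin p) (Fin p) ℝ) : Continuous (quadForm S) :=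
  continuous_id.inner (LinearMap.continuous_of_finiteDimensional _)

lemma quadForm_eq_norm_sq {B : Matrix (Fin p) (Fin p) ℝ} (hB : S⁻¹ = star B * B)
    (x : EuclideanSpace ℝ (Fin p)) : quadForm S x = ‖toEuclideanLin B x‖ ^ 2 := by
  rw [quadForm, hB, star_eq_conjTranspose, toLpLin_mul_same,
    toEuclideanLin_conjTranspose_eq_adjoint, LinearMap.comp_apply, LinearMap.adjoint_inner_right,
    real_inner_self_eq_norm_sq]

lemma quadForm_nonneg (hS : S.PosDef) (x : EuclideanSpace ℝ (Fin p)) : 0 ≤ quadForm S x := by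
  obtain ⟨B, hB⟩ := CStarAlgebra.nonneg_iff_eq_star_mul_self.mp hS.inv.posSemidef.nonneg
  rw [quadForm_eq_norm_sq hB]
  positivity

lemma volume_preimage_quadForm (hS : S.PosDef) (L : Set ℝ) :
    volume (quadForm S ⁻¹' L) =
      ENNReal.ofReal √S.det * volume ((fun x : EuclideanSpace ℝ (Fin p) => ‖x‖ ^ 2) ⁻¹' L) := by
  obtain ⟨B, hB⟩ := CStarAlgebra.nonneg_iff_eq_star_mul_self.mp hS.inv.posSemidef.nonneg
  have hdetB : B.det ^ 2 = S.det⁻¹ := by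
    rw [← Ring.inverse_eq_inv', ← det_nonsing_inv, hB, det_mul, star_eq_conjTranspose,
      det_conjTranspose, star_trivial, sq]
  have hBne : B.det ≠ 0 := fun h => hS.det_pos.ne' (by simpa [h, eq_comm] using hdetB)
  have hpre : quadForm S ⁻¹' L = toEuclideanLin B ⁻¹' ((fun y => ‖y‖ ^ 2) ⁻¹' L) := by
    ext x; simp [quadForm_eq_norm_sq hB]
  rw [hpre, Measure.addHaar_preimage_linearMap _ (by rwa [LinearMap.det_toLpLin]),
    LinearMap.det_toLpLin, abs_inv, ← Real.sqrt_sq_eq_abs, hdetB, Real.sqrt_inv, inv_inv]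

lemma volume_preimage_quadForm_sub (hS : S.PosDef) (μ : EuclideanSpace ℝ (Fin p)) (L : Set ℝ) :
    volume ((fun x => quadForm S (x - μ)) ⁻¹' L) =
      ENNReal.ofReal √S.det * volume ((fun x : EuclideanSpace ℝ (Fin p) => ‖x‖ ^ 2) ⁻¹' L) := by
  rw [← volume_preimage_quadForm hS,
    ← measure_preimage_add_right volume (-μ) (quadForm S ⁻¹' L)]
  simp_rw [sub_eq_add_neg]
  rfl

lemma ellDensity_eq (hS : S.PosDef) (g : ℝ → ℝ) (μ x : EuclideanSpace ℝ (Fin p)) :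
    ellDensity g μ S x = (√S.det)⁻¹ * g (max (quadForm S (x - μ)) 0) := by
  rw [ellDensity, max_eq_left (quadForm_nonneg hS _)]

end QuadForm

theorem ellipsoid_prob_maximized_at_center_general {p : ℕ} (g : ℝ → ℝ)
    (hmono : AntitoneOn g (Set.Ici 0))
    (μ₀ μ₁ : EuclideanSpace ℝ (Fin p)) (S₀ S₁ : Matrix (Fin p) (Fin p) ℝ)
    (hS₀ : S₀.PosDef) (hS₁ : S₁.PosDef) (hdet : S₁.det = S₀.det)
    (r : ℝ) :
    ellMeasure g μ₁ S₁ (ellipsoid μ₀ S₀ r) ≤ ellMeasure g μ₀ S₀ (ellipsoid μ₀ S₀ r) := by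
  set φ : ℝ → ℝ := fun u => (√S₀.det)⁻¹ * g (max u 0)
  have hφ : Antitone φ := fun u v huv => mul_le_mul_of_nonneg_left
    (hmono (le_max_right u 0) (le_max_right v 0) (max_le_max_right 0 huv)) (by positivity)
  have hq : ∀ (μ : EuclideanSpace ℝ (Fin p)) S, Continuous fun x => quadForm S (x - μ) :=
    fun μ S => (continuous_quadForm S).comp (continuous_sub_right μ)
  have hdens : ∀ (μ : EuclideanSpace ℝ (Fin p)) (S : Matrix (Fin p) (Fin p) ℝ),
      S.PosDef → S.det = S₀.det →
      ellDensity g μ S = fun x => φ (quadForm S (x - μ)) := fun μ S hS hSdet => by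
    ext x; rw [ellDensity_eq hS, hSdet]
  have hE : MeasurableSet (ellipsoid μ₀ S₀ r) :=
    measurableSet_le (hq μ₀ S₀).measurable measurable_const
  rw [ellMeasure, ellMeasure, withDensity_apply _ hE, withDensity_apply _ hE,
    hdens μ₁ S₁ hS₁ hdet, hdens μ₀ S₀ hS₀ rfl]
  refine setLIntegral_ofReal_le_of_meas_le_eq_of_nested
    (hφ.measurable.comp (hq μ₁ S₁).measurable).aemeasurable
    (hφ.measurable.comp (hq μ₀ S₀).measurable).aemeasurable hE (fun t _ => ?_) (fun t _ => ?_)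
  · change volume ((fun x => quadForm S₁ (x - μ₁)) ⁻¹' {u | t ≤ φ u}) =
      volume ((fun x => quadForm S₀ (x - μ₀)) ⁻¹' {u | t ≤ φ u})
    rw [volume_preimage_quadForm_sub hS₁, volume_preimage_quadForm_sub hS₀, hdet]
  · have hlower : IsLowerSet {u | t ≤ φ u} := fun _ _ hba ha => ha.trans (hφ hba)
    rcases hlower.total (isLowerSet_Iic (r ^ 2)) with h | h
    exacts [Or.inl (preimage_mono h), Or.inr (preimage_mono h)]

theorem ellipsoid_prob_maximized_at_center {p : ℕ} (hp : 1 ≤ p) (g : ℝ → ℝ)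
    (hmono : AntitoneOn g (Set.Ici 0))
    (hnorm : ∫ x : EuclideanSpace ℝ (Fin p), g (‖x‖ ^ 2) = 1)
    (μ₀ μ₁ : EuclideanSpace ℝ (Fin p)) (S₀ S₁ : Matrix (Fin p) (Fin p) ℝ)
    (hS₀ : S₀.PosDef) (hS₁ : S₁.PosDef) (hdet : S₁.det = S₀.det)
    (r : ℝ) (hr : 0 < r) :
    ellMeasure g μ₁ S₁ (ellipsoid μ₀ S₀ r) ≤ ellMeasure g μ₀ S₀ (ellipsoid μ₀ S₀ r) :=
  ellipsoid_prob_maximized_at_center_general g hmono μ₀ μ₁ S₀ S₁ hS₀ hS₁ hdet r
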